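/- Let Â = Y₂ V_r Σ_r⁻¹ U_r* be the rank-r DMD matrix, where U_r has orthonormal columns (U_r* U_r = I_r), and let Ã = U_r* Â U_r = U_r* Y₂ V_r Σ_r⁻¹. Suppose (λ, ω) is an eigenpair of Ã with λ ≠ 0, and define φ = (1/λ) Y₂ V_r Σ_r⁻¹ ω. Then φ is an eigenvector of Â with eigenvalue λ, i.e., Â φ = λ φ. -/
import Mathlib

open Matrix

/-- eigenpairs of the projected DMD matrix lift to eigenpairs of
the full DMD matrix (exact DMD modes of Tu et al.). -/
theorem dmd_mode_lifting {m n r : ℕ} (Y2 : Matrix (Fin m) (Fin n) ℝ)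
    (Ur : Matrix (Fin m) (Fin r) ℝ) (Vr : Matrix (Fin n) (Fin r) ℝ)
    (Sr : Matrix (Fin r) (Fin r) ℝ) (hSr : IsUnit Sr.det)
    (hU : Urᵀ * Ur = 1)
    (lam : ℝ) (hlam : lam ≠ 0) (ω : Fin r → ℝ)
    (heig : (Urᵀ * Y2 * Vr * Sr⁻¹).mulVec ω = lam • ω) :
    let Ahat := Y2 * Vr * Sr⁻¹ * Urᵀ
    let φ := (1 / lam) • (Y2 * Vr * Sr⁻¹).mulVec ω
    Ahat.mulVec φ = lam • φ := by
  intro Ahat φ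
  have key : (Urᵀ * (Y2 * Vr * Sr⁻¹)).mulVec ω = lam • ω := by
    simpa [Matrix.mul_assoc] using heig
  show (Y2 * Vr * Sr⁻¹ * Urᵀ).mulVec ((1 / lam) • (Y2 * Vr * Sr⁻¹).mulVec ω)
      = lam • ((1 / lam) • (Y2 * Vr * Sr⁻¹).mulVec ω)
  rw [Matrix.mulVec_smul, Matrix.mulVec_mulVec,
    show Y2 * Vr * Sr⁻¹ * Urᵀ * (Y2 * Vr * Sr⁻¹)
        = Y2 * Vr * Sr⁻¹ * (Urᵀ * (Y2 * Vr * Sr⁻¹)) by rw [Matrix.mul_assoc],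
    ← Matrix.mulVec_mulVec, key, Matrix.mulVec_smul, smul_smul, smul_smul]
  ring_nf
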